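/- arXiv:1005.5680 — 4 statements merged into one kernel-verified Lean document; each statement's English description precedes it below -/
import Mathlib

section
/- Let R be a commutative k-algebra, E a faithful R-module (r·E = 0 implies r = 0), ρ : E → Der_k(R) an R-linear map, [.,.] : E × E → E a skew-symmetric k-bilinear bracket, and H : E × E × E → E an alternating R-trilinear map with ρ∘H = 0. Assume the Leibniz rule [φ, f·ψ] = ρ(φ)(f)·ψ + f·[φ,ψ] and the twisted Jacobi identity [φ,[ψ₁,ψ₂]] = [[φ,ψ₁],ψ₂] + [ψ₁,[φ,ψ₂]] + H(φ,ψ₁,ψ₂) for all φ,ψ,ψ₁,ψ₂ ∈ E, f ∈ R. Then the anchor is automatically a morphism of brackets: ρ([ψ₁,ψ₂]) = ρ(ψ₁)∘ρ(ψ₂) − ρ(ψ₂)∘ρ(ψ₁) for all ψ₁,ψ₂ ∈ E. -/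
/-!
Expanding the twisted Jacobi identity at `(ψ₁, ψ₂, f • χ)` with the Leibniz rule and subtracting
`f •` the identity at `(ψ₁, ψ₂, χ)`, everything cancels except
`(ρ ψ₁ (ρ ψ₂ f) - ρ ψ₂ (ρ ψ₁ f) - ρ [ψ₁, ψ₂] f) • χ`, because the twist `H` is `R`-linear in `χ`.
This vanishes for every `χ`, so faithfulness of `E` kills the coefficient.
-/

section Jacobiator

variable {R E : Type*} [Ring R] [AddCommGroup E] [Module R E]

def jacobiator (br : E → E → E) (φ ψ χ : E) : E :=
  br φ (br ψ χ) - br (br φ ψ) χ - br ψ (br φ χ)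

theorem bracket_add_right_of_skew {br : E → E → E}
    (br_add_left : ∀ φ₁ φ₂ ψ : E, br (φ₁ + φ₂) ψ = br φ₁ ψ + br φ₂ ψ)
    (br_skew : ∀ φ ψ : E, br φ ψ = - br ψ φ) (φ ψ₁ ψ₂ : E) :
    br φ (ψ₁ + ψ₂) = br φ ψ₁ + br φ ψ₂ := by
  rw [br_skew, br_add_left, neg_add, ← br_skew, ← br_skew]

variable {br : E → E → E} {ρ : E → R → R}
  (br_add_right : ∀ φ ψ₁ ψ₂ : E, br φ (ψ₁ + ψ₂) = br φ ψ₁ + br φ ψ₂)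
  (leibniz : ∀ (φ : E) (f : R) (ψ : E), br φ (f • ψ) = ρ φ f • ψ + f • br φ ψ)
include br_add_right leibniz

theorem jacobiator_smul_right (φ ψ χ : E) (f : R) :
    jacobiator br φ ψ (f • χ) =
      f • jacobiator br φ ψ χ + (ρ φ (ρ ψ f) - ρ ψ (ρ φ f) - ρ (br φ ψ) f) • χ := by
  simp only [jacobiator, leibniz, br_add_right, smul_sub, sub_smul]
  abel

theorem anchor_bracket_apply_of_jacobiator_smul_right
    (faithful : ∀ r : R, (∀ χ : E, r • χ = 0) → r = 0)
    {φ ψ : E} (hJ : ∀ (f : R) (χ : E), jacobiator br φ ψ (f • χ) = f • jacobiator br φ ψ χ)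
    (f : R) : ρ (br φ ψ) f = ρ φ (ρ ψ f) - ρ ψ (ρ φ f) := by
  have hcoeff : ρ φ (ρ ψ f) - ρ ψ (ρ φ f) - ρ (br φ ψ) f = 0 :=
    faithful _ fun χ => by
      simpa [hJ] using (jacobiator_smul_right br_add_right leibniz φ ψ χ f).symm
  exact (sub_eq_zero.mp hcoeff).symm

end Jacobiator

theorem anchor_is_bracket_morphism_general
    {k R E : Type*} [Field k] [CommRing R] [Algebra k R]
    [AddCommGroup E] [Module R E]
    -- E is a faithful R-module
    (faithful : ∀ r : R, (∀ ψ : E, r • ψ = 0) → r = 0)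
    (ρ : E →ₗ[R] Derivation k R R)
    (br : E → E → E)
    (br_add_left : ∀ φ₁ φ₂ ψ : E, br (φ₁ + φ₂) ψ = br φ₁ ψ + br φ₂ ψ)
    (br_skew : ∀ φ ψ : E, br φ ψ = - br ψ φ)
    -- H is an alternating R-trilinear map
    (H : E →ₗ[R] E →ₗ[R] E →ₗ[R] E)
    -- Leibniz rule
    (leibniz : ∀ (φ : E) (f : R) (ψ : E), br φ (f • ψ) = ρ φ f • ψ + f • br φ ψ)
    -- twisted Jacobi identity
    (jacobi : ∀ φ ψ₁ ψ₂ : E,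
      br φ (br ψ₁ ψ₂) = br (br φ ψ₁) ψ₂ + br ψ₁ (br φ ψ₂) + H φ ψ₁ ψ₂) :
    ∀ ψ₁ ψ₂ : E, ρ (br ψ₁ ψ₂) = ⁅ρ ψ₁, ρ ψ₂⁆ := by
  have jacobiator_eq_H : ∀ φ ψ χ : E, jacobiator br φ ψ χ = H φ ψ χ := fun φ ψ χ => by
    rw [jacobiator, jacobi]
    abel
  intro ψ₁ ψ₂
  ext f
  rw [Derivation.commutator_apply]
  exact anchor_bracket_apply_of_jacobiator_smul_right
    (bracket_add_right_of_skew br_add_left br_skew) leibniz faithful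
    (fun f χ => by simp only [jacobiator_eq_H, map_smul]) f

/-- For a faithful `R`-module `E` with anchor `ρ`, skew-symmetric `k`-bilinear
bracket satisfying the Leibniz rule, and alternating `R`-trilinear twist `H` with `ρ∘H = 0`
satisfying the twisted Jacobi identity, the anchor is automatically a morphism of brackets:
`ρ([ψ₁,ψ₂]) = ρ(ψ₁)∘ρ(ψ₂) − ρ(ψ₂)∘ρ(ψ₁)`. -/
theorem anchor_is_bracket_morphism
    {k R E : Type*} [Field k] [CommRing R] [Algebra k R]
    [AddCommGroup E] [Module k E] [Module R E] [IsScalarTower k R E]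
    -- E is a faithful R-module
    (faithful : ∀ r : R, (∀ ψ : E, r • ψ = 0) → r = 0)
    (ρ : E →ₗ[R] Derivation k R R)
    (br : E → E → E)
    (br_add_left : ∀ φ₁ φ₂ ψ : E, br (φ₁ + φ₂) ψ = br φ₁ ψ + br φ₂ ψ)
    (br_smul_left : ∀ (a : k) (φ ψ : E), br (a • φ) ψ = a • br φ ψ)
    (br_skew : ∀ φ ψ : E, br φ ψ = - br ψ φ)
    -- H is an alternating R-trilinear map
    (H : E →ₗ[R] E →ₗ[R] E →ₗ[R] E)
    (H_alt₁₂ : ∀ φ ψ : E, H φ φ ψ = 0)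
    (H_alt₂₃ : ∀ φ ψ : E, H φ ψ ψ = 0)
    -- with values in ker ρ, i.e. ρ∘H = 0
    (H_ker : ∀ φ ψ χ : E, ρ (H φ ψ χ) = 0)
    -- Leibniz rule
    (leibniz : ∀ (φ : E) (f : R) (ψ : E), br φ (f • ψ) = ρ φ f • ψ + f • br φ ψ)
    -- twisted Jacobi identity
    (jacobi : ∀ φ ψ₁ ψ₂ : E,
      br φ (br ψ₁ ψ₂) = br (br φ ψ₁) ψ₂ + br ψ₁ (br φ ψ₂) + H φ ψ₁ ψ₂) :
    ∀ ψ₁ ψ₂ : E, ρ (br ψ₁ ψ₂) = ⁅ρ ψ₁, ρ ψ₂⁆ :=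
  anchor_is_bracket_morphism_general faithful ρ br br_add_left br_skew H leibniz jacobi
end

section
/- Let (R, E, [.,.], ρ, H) be an H-twisted Lie–Rinehart algebra and Ψ : E → ker ρ an R-linear map (a ker ρ-valued E-1-form). Then the square of the exterior covariant derivative is given by the curvature and Jacobiator insertions of H: for all ψ₀,ψ₁,ψ₂ ∈ E, D(DΨ)(ψ₀,ψ₁,ψ₂) = H(Ψ(ψ₀),ψ₁,ψ₂) − H(Ψ(ψ₁),ψ₀,ψ₂) + H(Ψ(ψ₂),ψ₀,ψ₁) − Ψ(H(ψ₀,ψ₁,ψ₂)). -/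
/-!
Expanding `D(DΨ)(ψ₀,ψ₁,ψ₂)`, the six terms `[ψᵢ, Ψ[ψⱼ,ψₖ]]` cancel in pairs. The remaining terms
group into three twisted Jacobi defects `[a,[b,x]] - [b,[a,x]] - [[a,b],x] = H(a,b,x)` with
`x = Ψψₖ`, which give the three insertions `H(Ψψₖ, ψᵢ, ψⱼ)`, and `Ψ` of the cyclic sum
`[[ψ₀,ψ₁],ψ₂] - [[ψ₀,ψ₂],ψ₁] + [[ψ₁,ψ₂],ψ₀]`, which the twisted Jacobi identity evaluates to
`-H(ψ₀,ψ₁,ψ₂)`.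
-/

section SkewBracket

variable {E : Type*} [AddCommGroup E] {br : E → E → E}

theorem bracket_sub_left (add_left : ∀ a b c : E, br (a + b) c = br a c + br b c)
    (a b c : E) : br (a - b) c = br a c - br b c :=
  (AddMonoidHom.mk' (br · c) (add_left · · c)).map_sub a b

theorem bracket_sub_right (add_left : ∀ a b c : E, br (a + b) c = br a c + br b c)
    (skew : ∀ a b : E, br a b = -br b a) (a b c : E) :
    br c (a - b) = br c a - br c b := by
  rw [skew c, bracket_sub_left add_left, skew a c, skew b c]
  abel

theorem twisted_jacobi_cyclic_sum {H : E → E → E → E} (skew : ∀ a b : E, br a b = -br b a)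
    (jacobi : ∀ a b c : E, br a (br b c) = br (br a b) c + br b (br a c) + H a b c)
    (a b c : E) :
    br (br a b) c - br (br a c) b + br (br b c) a = -H a b c := by
  rw [skew (br a c) b, skew (br b c) a]
  linear_combination (norm := abel) -jacobi a b c

end SkewBracket

theorem LinearMap.rotate_of_alternating {R M N : Type*} [CommRing R] [AddCommGroup M]
    [Module R M] [AddCommGroup N] [Module R N] {H : M →ₗ[R] M →ₗ[R] M →ₗ[R] N}
    (alt₁₂ : ∀ a b : M, H a a b = 0) (alt₂₃ : ∀ a b : M, H a b b = 0) (a b c : M) :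
    H c a b = H a b c := by
  have swap₁₂ : -H c a = H a c := IsAlt.neg (fun x => LinearMap.ext (alt₁₂ x)) c a
  have swap₂₃ : -H a c b = H a b c := IsAlt.neg (alt₂₃ a) c b
  rw [← swap₂₃, ← swap₁₂, LinearMap.neg_apply, neg_neg]

theorem extCovDer_squared_of_one_form_general
    {R E : Type*} [CommRing R]
    [AddCommGroup E] [Module R E]
    (br : E → E → E)
    (br_add_left : ∀ φ₁ φ₂ ψ : E, br (φ₁ + φ₂) ψ = br φ₁ ψ + br φ₂ ψ)
    (br_skew : ∀ φ ψ : E, br φ ψ = - br ψ φ)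
    (H : E →ₗ[R] E →ₗ[R] E →ₗ[R] E)
    (H_alt₁₂ : ∀ φ ψ : E, H φ φ ψ = 0)
    (H_alt₂₃ : ∀ φ ψ : E, H φ ψ ψ = 0)
    (jacobi : ∀ φ ψ₁ ψ₂ : E,
      br φ (br ψ₁ ψ₂) = br (br φ ψ₁) ψ₂ + br ψ₁ (br φ ψ₂) + H φ ψ₁ ψ₂)
    -- a ker ρ-valued E-1-form Ψ (the connection on ker ρ is ∇_φψ = [φ,ψ] = br φ ψ)
    (Ψ : E →ₗ[R] E)
    -- its exterior covariant derivative DΨ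
    (DΨ : E → E → E)
    (hDΨ : ∀ ψ₀ ψ₁ : E, DΨ ψ₀ ψ₁ = br ψ₀ (Ψ ψ₁) - br ψ₁ (Ψ ψ₀) - Ψ (br ψ₀ ψ₁))
    -- the second exterior covariant derivative D(DΨ)
    (DDΨ : E → E → E → E)
    (hDDΨ : ∀ ψ₀ ψ₁ ψ₂ : E, DDΨ ψ₀ ψ₁ ψ₂ =
      br ψ₀ (DΨ ψ₁ ψ₂) - br ψ₁ (DΨ ψ₀ ψ₂) + br ψ₂ (DΨ ψ₀ ψ₁)
        - DΨ (br ψ₀ ψ₁) ψ₂ + DΨ (br ψ₀ ψ₂) ψ₁ - DΨ (br ψ₁ ψ₂) ψ₀) :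
    ∀ ψ₀ ψ₁ ψ₂ : E, DDΨ ψ₀ ψ₁ ψ₂ =
      H (Ψ ψ₀) ψ₁ ψ₂ - H (Ψ ψ₁) ψ₀ ψ₂ + H (Ψ ψ₂) ψ₀ ψ₁ - Ψ (H ψ₀ ψ₁ ψ₂) := by
  intro ψ₀ ψ₁ ψ₂
  have cyclic := congrArg Ψ (twisted_jacobi_cyclic_sum br_skew jacobi ψ₀ ψ₁ ψ₂)
  simp only [map_add, map_sub, map_neg] at cyclic
  have rotate := LinearMap.rotate_of_alternating H_alt₁₂ H_alt₂₃
  rw [hDDΨ, rotate ψ₁ ψ₂, rotate ψ₀ ψ₂, rotate ψ₀ ψ₁]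
  simp only [hDΨ, bracket_sub_right br_add_left br_skew]
  linear_combination (norm := abel) jacobi ψ₀ ψ₁ (Ψ ψ₂) - jacobi ψ₀ ψ₂ (Ψ ψ₁)
    + jacobi ψ₁ ψ₂ (Ψ ψ₀) + cyclic

/-- For an `H`-twisted Lie–Rinehart algebra and a `ker ρ`-valued `E`-1-form
`Ψ`, the square of the exterior covariant derivative is given by the curvature and
Jacobiator insertions of `H`:
`D(DΨ)(ψ₀,ψ₁,ψ₂) = H(Ψψ₀,ψ₁,ψ₂) − H(Ψψ₁,ψ₀,ψ₂) + H(Ψψ₂,ψ₀,ψ₁) − Ψ(H(ψ₀,ψ₁,ψ₂))`. -/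
theorem extCovDer_squared_of_one_form
    {k R E : Type*} [Field k] [CommRing R] [Algebra k R]
    [AddCommGroup E] [Module k E] [Module R E] [IsScalarTower k R E]
    (ρ : E →ₗ[R] Derivation k R R)
    (br : E → E → E)
    (br_add_left : ∀ φ₁ φ₂ ψ : E, br (φ₁ + φ₂) ψ = br φ₁ ψ + br φ₂ ψ)
    (br_smul_left : ∀ (a : k) (φ ψ : E), br (a • φ) ψ = a • br φ ψ)
    (br_skew : ∀ φ ψ : E, br φ ψ = - br ψ φ)
    (H : E →ₗ[R] E →ₗ[R] E →ₗ[R] E)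
    (H_alt₁₂ : ∀ φ ψ : E, H φ φ ψ = 0)
    (H_alt₂₃ : ∀ φ ψ : E, H φ ψ ψ = 0)
    (H_ker : ∀ φ ψ χ : E, ρ (H φ ψ χ) = 0)
    (leibniz : ∀ (φ : E) (f : R) (ψ : E), br φ (f • ψ) = ρ φ f • ψ + f • br φ ψ)
    (jacobi : ∀ φ ψ₁ ψ₂ : E,
      br φ (br ψ₁ ψ₂) = br (br φ ψ₁) ψ₂ + br ψ₁ (br φ ψ₂) + H φ ψ₁ ψ₂)
    (anchor_br : ∀ φ ψ : E, ρ (br φ ψ) = ⁅ρ φ, ρ ψ⁆)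
    -- a ker ρ-valued E-1-form Ψ (the connection on ker ρ is ∇_φψ = [φ,ψ] = br φ ψ)
    (Ψ : E →ₗ[R] E)
    (Ψ_ker : ∀ ψ : E, ρ (Ψ ψ) = 0)
    -- its exterior covariant derivative DΨ
    (DΨ : E → E → E)
    (hDΨ : ∀ ψ₀ ψ₁ : E, DΨ ψ₀ ψ₁ = br ψ₀ (Ψ ψ₁) - br ψ₁ (Ψ ψ₀) - Ψ (br ψ₀ ψ₁))
    -- the second exterior covariant derivative D(DΨ)
    (DDΨ : E → E → E → E)
    (hDDΨ : ∀ ψ₀ ψ₁ ψ₂ : E, DDΨ ψ₀ ψ₁ ψ₂ =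
      br ψ₀ (DΨ ψ₁ ψ₂) - br ψ₁ (DΨ ψ₀ ψ₂) + br ψ₂ (DΨ ψ₀ ψ₁)
        - DΨ (br ψ₀ ψ₁) ψ₂ + DΨ (br ψ₀ ψ₂) ψ₁ - DΨ (br ψ₁ ψ₂) ψ₀) :
    ∀ ψ₀ ψ₁ ψ₂ : E, DDΨ ψ₀ ψ₁ ψ₂ =
      H (Ψ ψ₀) ψ₁ ψ₂ - H (Ψ ψ₁) ψ₀ ψ₂ + H (Ψ ψ₂) ψ₀ ψ₁ - Ψ (H ψ₀ ψ₁ ψ₂) :=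
  extCovDer_squared_of_one_form_general br br_add_left br_skew H H_alt₁₂ H_alt₂₃ jacobi Ψ DΨ hDΨ DDΨ
    hDDΨ
end

section
/- Let (R, E, [.,.], ρ, H) be an H-twisted Lie–Rinehart algebra and let α be an alternating R-multilinear p-form on E with values in R (p ≥ 0) that is annihilated by insertion of H, i.e. α(H(ψ,χ,ω), φ₂,…,φ_p) = 0 for all ψ,χ,ω,φ₂,…,φ_p ∈ E (this condition is vacuous for p = 0). Then D(Dα) = 0, where D is the Chevalley–Eilenberg-type differential defined by ρ and [.,.]. In particular the naive differential squares to zero on the naive cochains of scalar type. -/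
section
variable {k R E : Type*} [Field k] [CommRing R] [Algebra k R]
  [AddCommGroup E] [Module k E] [Module R E] [IsScalarTower k R E]

/-- The Chevalley–Eilenberg-type differential on scalar-valued alternating `p`-forms on `E`,
defined by the anchor `ρ` and the bracket:
`Dω(ψ₀,…,ψ_p) = Σᵢ (−1)ⁱ ρ(ψᵢ)(ω(…,ψ̂ᵢ,…)) + Σ_{i<j} (−1)^{i+j} ω([ψᵢ,ψⱼ],…,ψ̂ᵢ,…,ψ̂ⱼ,…)`. -/
noncomputable def ceDiff (ρ : E →ₗ[R] Derivation k R R) (br : E → E → E) :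
    (p : ℕ) → ((Fin p → E) → R) → (Fin (p + 1) → E) → R
  | 0, ω, ψ => ∑ i : Fin 1, ((-1 : ℤ) ^ (i : ℕ)) • (ρ (ψ i)) (ω (i.removeNth ψ))
  | (q + 1), ω, ψ =>
      (∑ i : Fin (q + 2), ((-1 : ℤ) ^ (i : ℕ)) • (ρ (ψ i)) (ω (i.removeNth ψ)))
      + ∑ i : Fin (q + 2), ∑ j : Fin (q + 2),
          if h : i < j then
            ((-1 : ℤ) ^ ((i : ℕ) + (j : ℕ))) •
              ω (Fin.cons (br (ψ i) (ψ j))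
                (fun l : Fin q =>
                  ψ (j.succAbove
                    ((⟨(i : ℕ), lt_of_lt_of_le (Fin.lt_def.mp h)
                        (Nat.lt_succ_iff.mp j.isLt)⟩ : Fin (q + 1)).succAbove l))))
          else 0

end

/-!
Write `ι_X` for insertion of `X` into the first argument and `L_X` for the Lie derivative along
`X`. The differential satisfies Cartan's formula `ι_X D = L_X - D ι_X`, and it commutes with
`L_X`: this is where the twisted Jacobi identity enters, its `H`-term being killed because the
form vanishes on values of `H`, together with `ρ [φ, ψ] = [ρ φ, ρ ψ]`. Hence
`ι_X D D α = L_X D α - D (L_X α - D ι_X α) = D D (ι_X α)`, which vanishes by induction on the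
degree, since `ι_X α` is again an alternating form annihilated by insertion of `H`.
-/

open Function

theorem Fintype.sum_sum_sub_sum_sum_eq_sum_diag {ι M : Type*} [Fintype ι] [AddCommGroup M]
    (f g : ι → ι → M) (hoff : ∀ j l, j ≠ l → f j l = g l j) :
    ∑ j, ∑ l, f j l - ∑ j, ∑ l, g j l = ∑ j, f j j - ∑ j, g j j := by
  rw [Finset.sum_comm (f := g), ← Finset.sum_sub_distrib, ← Finset.sum_sub_distrib]
  refine Finset.sum_congr rfl fun j _ => ?_
  rw [← Finset.sum_sub_distrib]
  exact Fintype.sum_eq_single j fun l hl => by rw [hoff j l (Ne.symm hl), sub_self]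

theorem Fin.removeNth_succ_cons {α : Type*} {n : ℕ} (i : Fin (n + 1)) (x : α)
    (p : Fin (n + 1) → α) :
    i.succ.removeNth (Fin.cons x p : Fin (n + 2) → α) = Fin.cons x (i.removeNth p) :=
  Fin.cons_comp_succ_succAbove x p i

section Forms
variable {E M : Type*}

def interiorProd {n : ℕ} (X : E) (η : (Fin (n + 1) → E) → M) : (Fin n → E) → M :=
  fun v => η (Fin.cons X v)

theorem interiorProd_update {n : ℕ} (X : E) (η : (Fin (n + 1) → E) → M) (v : Fin n → E)
    (i : Fin n) (y : E) :
    interiorProd X η (update v i y) = η (update (Fin.cons X v) i.succ y) := by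
  rw [interiorProd, Fin.cons_update]

theorem eq_of_forall_interiorProd_eq {n : ℕ} {η₁ η₂ : (Fin (n + 1) → E) → M}
    (h : ∀ X, interiorProd X η₁ = interiorProd X η₂) : η₁ = η₂ := by
  funext ψ
  rw [← Fin.cons_self_tail ψ]
  exact congrFun (h (ψ 0)) (Fin.tail ψ)

variable [AddCommGroup M]

theorem interiorProd_update_eq_zero {n : ℕ} {η : (Fin (n + 1) → E) → M} (H : E → E → E → E)
    (hH : ∀ (x y z : E) (v : Fin (n + 1) → E) (i : Fin (n + 1)), η (update v i (H x y z)) = 0)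
    (X : E) (x y z : E) (v : Fin n → E) (i : Fin n) :
    interiorProd X η (update v i (H x y z)) = 0 := by
  rw [interiorProd_update]
  exact hH x y z _ _

theorem interiorProd_sub {n : ℕ} (X : E) (η₁ η₂ : (Fin (n + 1) → E) → M) :
    interiorProd X (η₁ - η₂) = interiorProd X η₁ - interiorProd X η₂ :=
  rfl

/-- When `2 = 0` the differential of an alternating form need not be alternating, as `[φ, φ]` need
not vanish; this sign rule is what survives. -/
def IsSkewSymmetric {n : ℕ} (η : (Fin (n + 1) → E) → M) : Prop :=
  ∀ (j : Fin (n + 1)) (x : E) (v : Fin n → E),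
    η (j.insertNth x v) = (-1 : ℤ) ^ (j : ℕ) • η (Fin.cons x v)

theorem IsSkewSymmetric.sub {n : ℕ} {η₁ η₂ : (Fin (n + 1) → E) → M}
    (h₁ : IsSkewSymmetric η₁) (h₂ : IsSkewSymmetric η₂) : IsSkewSymmetric (η₁ - η₂) := by
  intro j x v
  simp only [Pi.sub_apply, h₁ j, h₂ j, smul_sub]

theorem IsSkewSymmetric.cons_cons {m : ℕ} {η : (Fin (m + 2) → E) → M}
    (hη : IsSkewSymmetric η) (a b : E) (w : Fin m → E) :
    η (Fin.cons a (Fin.cons b w)) = -η (Fin.cons b (Fin.cons a w)) := by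
  have h := hη 1 b (Fin.cons a w)
  rw [show (1 : Fin (m + 2)) = Fin.succ 0 from rfl, Fin.insertNth_succ_cons,
    Fin.insertNth_zero'] at h
  simp [h]

theorem isSkewSymmetric_fin_one (η : (Fin 1 → E) → M) : IsSkewSymmetric η := by
  intro j x v
  rw [Fin.fin_one_eq_zero j, Fin.insertNth_zero']
  simp

theorem isSkewSymmetric_of_interiorProd {m : ℕ} {η : (Fin (m + 2) → E) → M}
    (hswap : ∀ (a b : E) (w : Fin m → E),
      η (Fin.cons a (Fin.cons b w)) = -η (Fin.cons b (Fin.cons a w)))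
    (hι : ∀ Y : E, IsSkewSymmetric (interiorProd Y η)) : IsSkewSymmetric η := by
  intro j x v
  induction j using Fin.cases with
  | zero => rw [Fin.insertNth_zero']; simp
  | succ j =>
    rw [← Fin.cons_self_tail v, Fin.insertNth_succ_cons]
    have h := hι (v 0) j x (Fin.tail v)
    simp only [interiorProd] at h
    rw [h, hswap, Fin.val_succ, pow_succ, mul_neg_one, neg_smul, smul_neg]

variable [AddCommGroup E]

structure IsAlternatingAdditive {n : ℕ} (η : (Fin n → E) → M) : Prop where
  map_eq_zero_of_eq : ∀ (v : Fin n → E) (i j : Fin n), i ≠ j → v i = v j → η v = 0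
  map_update_add : ∀ (v : Fin n → E) (i : Fin n) (x y : E),
    η (update v i (x + y)) = η (update v i x) + η (update v i y)

namespace IsAlternatingAdditive

variable {n : ℕ} {η : (Fin n → E) → M}

theorem map_update_neg (hη : IsAlternatingAdditive η) (v : Fin n → E) (i : Fin n) (x : E) :
    η (update v i (-x)) = -η (update v i x) :=
  (AddMonoidHom.mk' (fun x => η (update v i x)) (hη.map_update_add v i)).map_neg x

theorem map_update_update_swap (hη : IsAlternatingAdditive η) (v : Fin n → E) {i j : Fin n}
    (hij : i ≠ j) (x y : E) :
    η (update (update v i x) j y) = -η (update (update v i y) j x) := by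
  have hdiag : ∀ a : E, η (update (update v i a) j a) = 0 := fun a =>
    hη.map_eq_zero_of_eq _ i j hij (by simp [update_of_ne hij])
  have hadd : ∀ c : E, η (update (update v i (x + y)) j c)
      = η (update (update v i x) j c) + η (update (update v i y) j c) := by
    intro c
    rw [update_comm hij, hη.map_update_add, update_comm hij.symm, update_comm hij.symm]
  have h := hdiag (x + y)
  rw [hη.map_update_add, hadd x, hadd y, hdiag x, hdiag y, zero_add, add_zero] at h
  exact eq_neg_of_add_eq_zero_right h

theorem interiorProd {η : (Fin (n + 1) → E) → M} (hη : IsAlternatingAdditive η) (X : E) :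
    IsAlternatingAdditive (interiorProd X η) where
  map_eq_zero_of_eq v i j hij hv :=
    hη.map_eq_zero_of_eq (Fin.cons X v) i.succ j.succ (by simpa using hij) (by simpa using hv)
  map_update_add v i x y := by
    simp only [interiorProd_update]
    exact hη.map_update_add _ _ x y

theorem interiorProd_neg {η : (Fin (n + 1) → E) → M} (hη : IsAlternatingAdditive η) (X : E) :
    _root_.interiorProd (-X) η = -_root_.interiorProd X η := by
  funext v
  simpa [_root_.interiorProd, Fin.update_cons_zero] using hη.map_update_neg (Fin.cons X v) 0 X

theorem map_cons_cons_swap {m : ℕ} {η : (Fin (m + 2) → E) → M} (hη : IsAlternatingAdditive η)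
    (a b : E) (w : Fin m → E) :
    η (Fin.cons a (Fin.cons b w)) = -η (Fin.cons b (Fin.cons a w)) := by
  have h := hη.map_update_update_swap (Fin.cons b (Fin.cons a w)) (Fin.succ_ne_zero 0).symm a b
  rwa [Fin.update_cons_zero, Fin.update_cons_zero, ← Fin.cons_update, ← Fin.cons_update,
    Fin.update_cons_zero, Fin.update_cons_zero] at h

theorem isSkewSymmetric : ∀ {n : ℕ} {η : (Fin (n + 1) → E) → M}, IsAlternatingAdditive η →
    IsSkewSymmetric η
  | 0, η, _ => isSkewSymmetric_fin_one η
  | _ + 1, _, hη => isSkewSymmetric_of_interiorProd hη.map_cons_cons_swap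
      fun X => (hη.interiorProd X).isSkewSymmetric

end IsAlternatingAdditive

end Forms

section LieDerivative
variable {k R E : Type*} [CommRing k] [CommRing R] [Algebra k R] [AddCommGroup E] [Module R E]
  (ρ : E →ₗ[R] Derivation k R R) (br : E → E → E)

def lieDeriv {n : ℕ} (X : E) (η : (Fin n → E) → R) : (Fin n → E) → R :=
  fun χ => ρ X (η χ) - ∑ j, η (update χ j (br X (χ j)))

theorem lieDeriv_sub {n : ℕ} (X : E) (η₁ η₂ : (Fin n → E) → R) :
    lieDeriv ρ br X (η₁ - η₂) = lieDeriv ρ br X η₁ - lieDeriv ρ br X η₂ := by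
  funext χ
  simp only [lieDeriv, Pi.sub_apply, map_sub, Finset.sum_sub_distrib]
  ring

theorem interiorProd_lieDeriv {n : ℕ} (X Y : E) (η : (Fin (n + 1) → E) → R) :
    interiorProd Y (lieDeriv ρ br X η)
      = lieDeriv ρ br X (interiorProd Y η) - interiorProd (br X Y) η := by
  funext χ
  simp only [interiorProd, lieDeriv, Pi.sub_apply, Fin.sum_univ_succ, Fin.cons_zero,
    Fin.update_cons_zero, Fin.cons_succ, ← Fin.cons_update]
  ring

variable {ρ br} in
theorem IsAlternatingAdditive.lieDeriv (hbr : ∀ a x y : E, br a (x + y) = br a x + br a y)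
    {n : ℕ} {η : (Fin n → E) → R} (hη : IsAlternatingAdditive η) (X : E) :
    IsAlternatingAdditive (lieDeriv ρ br X η) where
  map_eq_zero_of_eq v i j hij hv := by
    have hterm : ∀ c : E, η (update v i c) + η (update v j c) = 0 := by
      intro c
      have h := hη.map_update_update_swap v hij.symm (v i) c
      rwa [hv, update_eq_self, ← hv,
        (update_eq_self_iff (f := update v j c)).2 (update_of_ne hij c v).symm,
        eq_neg_iff_add_eq_zero] at h
    have hsum : ∑ l, η (update v l (br X (v l)))
        = η (update v i (br X (v i))) + η (update v j (br X (v j))) :=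
      Fintype.sum_eq_add i j hij fun l hl =>
        hη.map_eq_zero_of_eq _ i j hij
          (by simp [update_of_ne hl.1.symm, update_of_ne hl.2.symm, hv])
    rw [_root_.lieDeriv, hη.map_eq_zero_of_eq v i j hij hv, map_zero, hsum, ← hv, hterm, sub_zero]
  map_update_add v i x y := by
    have hterm : ∀ l, η (update (update v i (x + y)) l (br X (update v i (x + y) l)))
        = η (update (update v i x) l (br X (update v i x l)))
          + η (update (update v i y) l (br X (update v i y l))) := by
      intro l
      rcases eq_or_ne l i with rfl | hl
      · simp only [update_self, update_idem, hbr, hη.map_update_add]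
      · rw [update_of_ne hl, update_of_ne hl, update_of_ne hl, update_comm hl.symm,
          hη.map_update_add, update_comm hl, update_comm hl]
    simp only [_root_.lieDeriv, hη.map_update_add v i x y, map_add, hterm, Finset.sum_add_distrib]
    ring

variable {ρ br} in
theorem lieDeriv_lieDeriv_sub_lieDeriv_lieDeriv (H : E → E → E → E)
    (jacobi : ∀ φ ψ₁ ψ₂ : E,
      br φ (br ψ₁ ψ₂) = br (br φ ψ₁) ψ₂ + br ψ₁ (br φ ψ₂) + H φ ψ₁ ψ₂)
    (anchor_br : ∀ φ ψ : E, ρ (br φ ψ) = ⁅ρ φ, ρ ψ⁆) {n : ℕ} {η : (Fin n → E) → R}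
    (hadd : ∀ (v : Fin n → E) (i : Fin n) (x y : E),
      η (update v i (x + y)) = η (update v i x) + η (update v i y))
    (hH : ∀ (x y z : E) (v : Fin n → E) (i : Fin n), η (update v i (H x y z)) = 0) (X Y : E) :
    lieDeriv ρ br X (lieDeriv ρ br Y η) - lieDeriv ρ br Y (lieDeriv ρ br X η)
      = lieDeriv ρ br (br X Y) η := by
  funext χ
  have hdiag := Fintype.sum_sum_sub_sum_sum_eq_sum_diag
    (fun j l => η (update (update χ j (br X (χ j))) l (br Y (update χ j (br X (χ j)) l))))
    (fun j l => η (update (update χ j (br Y (χ j))) l (br X (update χ j (br Y (χ j)) l))))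
    (fun j l hjl => by
      simp only [update_of_ne hjl.symm, update_of_ne hjl]
      rw [update_comm hjl])
  have hjacobi : ∀ j, η (update χ j (br X (br Y (χ j))))
      = η (update χ j (br (br X Y) (χ j))) + η (update χ j (br Y (br X (χ j)))) := by
    intro j
    rw [jacobi, hadd, hadd, hH, add_zero]
  simp only [update_self, update_idem, hjacobi, Finset.sum_add_distrib] at hdiag
  simp only [lieDeriv, Pi.sub_apply, map_sub, map_sum, Finset.sum_sub_distrib, anchor_br,
    Derivation.commutator_apply]
  linear_combination hdiag

end LieDerivative

section BracketTerm
variable {R E : Type*} [CommRing R] (br : E → E → E)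

def bracketTerm {q : ℕ} (η : (Fin (q + 1) → E) → R) (ψ : Fin (q + 2) → E)
    (i j : Fin (q + 2)) : R :=
  if h : i < j then
    ((-1 : ℤ) ^ ((i : ℕ) + (j : ℕ))) •
      η (Fin.cons (br (ψ i) (ψ j))
        (fun l : Fin q =>
          ψ (j.succAbove
            ((⟨(i : ℕ), lt_of_lt_of_le (Fin.lt_def.mp h)
                (Nat.lt_succ_iff.mp j.isLt)⟩ : Fin (q + 1)).succAbove l))))
  else 0

variable {br}

theorem bracketTerm_of_lt {q : ℕ} (η : (Fin (q + 1) → E) → R) (ψ : Fin (q + 2) → E)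
    {i j : Fin (q + 2)} (h : i < j) :
    bracketTerm br η ψ i j = ((-1 : ℤ) ^ ((i : ℕ) + (j : ℕ))) •
      η (Fin.cons (br (ψ i) (ψ j))
        ((i.castLT (lt_of_lt_of_le h (Nat.lt_succ_iff.mp j.isLt))).removeNth (j.removeNth ψ))) :=
  dif_pos h

theorem bracketTerm_of_not_lt {q : ℕ} (η : (Fin (q + 1) → E) → R) (ψ : Fin (q + 2) → E)
    {i j : Fin (q + 2)} (h : ¬i < j) : bracketTerm br η ψ i j = 0 :=
  dif_neg h

theorem bracketTerm_add {q : ℕ} (η₁ η₂ : (Fin (q + 1) → E) → R) (ψ : Fin (q + 2) → E)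
    (i j : Fin (q + 2)) :
    bracketTerm br (η₁ + η₂) ψ i j = bracketTerm br η₁ ψ i j + bracketTerm br η₂ ψ i j := by
  unfold bracketTerm
  split_ifs <;> simp [smul_add]

theorem bracketTerm_cons_zero_succ {q : ℕ} {η : (Fin (q + 1) → E) → R}
    (hη : IsSkewSymmetric η) (X : E) (χ : Fin (q + 1) → E) (j : Fin (q + 1)) :
    bracketTerm br η (Fin.cons X χ) 0 j.succ = -η (update χ j (br X (χ j))) := by
  have hzero : ∀ h, Fin.castLT (n := q + 1) (0 : Fin (q + 2)) h = 0 := fun _ => rfl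
  rw [bracketTerm_of_lt η _ (Fin.succ_pos j), ← Fin.insertNth_removeNth, hη, hzero,
    Fin.removeNth_succ_cons, Fin.removeNth_zero, Fin.tail_cons, Fin.cons_zero, Fin.cons_succ,
    Fin.val_zero, Fin.val_succ, zero_add, pow_succ, mul_neg_one, neg_smul]

theorem bracketTerm_cons_succ_succ {q : ℕ} {η : (Fin (q + 2) → E) → R}
    (hη : IsSkewSymmetric η) (X : E) (χ : Fin (q + 2) → E) (i j : Fin (q + 2)) :
    bracketTerm br η (Fin.cons X χ) i.succ j.succ = -bracketTerm br (interiorProd X η) χ i j := by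
  by_cases h : i < j
  · rw [bracketTerm_of_lt η _ (Fin.succ_lt_succ_iff.2 h), bracketTerm_of_lt _ _ h]
    have hi : (i : ℕ) < q + 1 := lt_of_lt_of_le h (Nat.lt_succ_iff.mp j.isLt)
    have hsucc : ∀ h, Fin.castLT (n := q + 2) i.succ h = (Fin.castLT i hi).succ := fun _ => rfl
    rw [hsucc, Fin.removeNth_succ_cons, Fin.removeNth_succ_cons, Fin.cons_succ, Fin.cons_succ,
      hη.cons_cons, interiorProd, Fin.val_succ, Fin.val_succ, smul_neg,
      show (i : ℕ) + 1 + ((j : ℕ) + 1) = (i : ℕ) + (j : ℕ) + 2 by ring, pow_add, neg_one_sq,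
      mul_one]
  · rw [bracketTerm_of_not_lt η _ (by simpa using h), bracketTerm_of_not_lt _ _ h, neg_zero]

theorem sum_bracketTerm_cons_zero {q : ℕ} {η : (Fin (q + 1) → E) → R}
    (hη : IsSkewSymmetric η) (X : E) (χ : Fin (q + 1) → E) :
    ∑ j, bracketTerm br η (Fin.cons X χ) 0 j = -∑ j, η (update χ j (br X (χ j))) := by
  rw [Fin.sum_univ_succ, bracketTerm_of_not_lt η _ (lt_irrefl 0), zero_add,
    ← Finset.sum_neg_distrib]
  simp only [bracketTerm_cons_zero_succ hη]

theorem sum_bracketTerm_cons_succ {q : ℕ} {η : (Fin (q + 2) → E) → R}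
    (hη : IsSkewSymmetric η) (X : E) (χ : Fin (q + 2) → E) (i : Fin (q + 2)) :
    ∑ j, bracketTerm br η (Fin.cons X χ) i.succ j
      = -∑ j, bracketTerm br (interiorProd X η) χ i j := by
  rw [Fin.sum_univ_succ, bracketTerm_of_not_lt η _ (Fin.not_lt_zero _), zero_add,
    ← Finset.sum_neg_distrib]
  simp only [bracketTerm_cons_succ_succ hη]

end BracketTerm

section Differential
variable {k R E : Type*} [Field k] [CommRing R] [Algebra k R] [AddCommGroup E] [Module R E]
  (ρ : E →ₗ[R] Derivation k R R) (br : E → E → E)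

def anchorSum {n : ℕ} (η : (Fin n → E) → R) (ψ : Fin (n + 1) → E) : R :=
  ∑ i : Fin (n + 1), ((-1 : ℤ) ^ (i : ℕ)) • ρ (ψ i) (η (i.removeNth ψ))

theorem anchorSum_cons {n : ℕ} (η : (Fin (n + 1) → E) → R) (X : E) (χ : Fin (n + 1) → E) :
    anchorSum ρ η (Fin.cons X χ) = ρ X (η χ) - anchorSum ρ (interiorProd X η) χ := by
  simp only [anchorSum, interiorProd, Fin.sum_univ_succ (n := n + 1), Fin.val_zero, pow_zero,
    one_smul, Fin.cons_zero, Fin.removeNth_zero, Fin.tail_cons, Fin.cons_succ, Fin.val_succ,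
    pow_succ, mul_neg_one, neg_smul, Fin.removeNth_succ_cons, Finset.sum_neg_distrib]
  ring

theorem ceDiff_zero_eq (η : (Fin 0 → E) → R) : ceDiff ρ br 0 η = anchorSum ρ η := rfl

theorem ceDiff_succ_apply {q : ℕ} (η : (Fin (q + 1) → E) → R) (ψ : Fin (q + 2) → E) :
    ceDiff ρ br (q + 1) η ψ = anchorSum ρ η ψ + ∑ i, ∑ j, bracketTerm br η ψ i j :=
  rfl

theorem interiorProd_ceDiff_zero (η : (Fin 0 → E) → R) (X : E) :
    interiorProd X (ceDiff ρ br 0 η) = lieDeriv ρ br X η := by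
  funext χ
  simp [interiorProd, ceDiff_zero_eq, anchorSum, lieDeriv]

theorem interiorProd_ceDiff_succ {n : ℕ} {η : (Fin (n + 1) → E) → R} (hη : IsSkewSymmetric η)
    (X : E) :
    interiorProd X (ceDiff ρ br (n + 1) η)
      = lieDeriv ρ br X η - ceDiff ρ br n (interiorProd X η) := by
  funext χ
  rw [interiorProd, ceDiff_succ_apply, Fin.sum_univ_succ, sum_bracketTerm_cons_zero hη,
    anchorSum_cons]
  cases n with
  | zero =>
    have hrows : ∑ i : Fin 1, ∑ j, bracketTerm br η (Fin.cons X χ) i.succ j = 0 :=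
      Finset.sum_eq_zero fun i _ => Finset.sum_eq_zero fun j _ =>
        bracketTerm_of_not_lt η _ (by
          rw [Fin.fin_one_eq_zero i, not_lt]; exact Fin.le_last j)
    simp only [hrows, Pi.sub_apply, lieDeriv, ceDiff_zero_eq]
    ring
  | succ m =>
    simp only [sum_bracketTerm_cons_succ hη, Finset.sum_neg_distrib, Pi.sub_apply, lieDeriv,
      ceDiff_succ_apply]
    ring

theorem ceDiff_add {n : ℕ} (η₁ η₂ : (Fin n → E) → R) :
    ceDiff ρ br n (η₁ + η₂) = ceDiff ρ br n η₁ + ceDiff ρ br n η₂ := by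
  funext ψ
  cases n with
  | zero => simp [ceDiff_zero_eq, anchorSum, smul_add, Finset.sum_add_distrib]
  | succ q =>
    simp only [ceDiff_succ_apply, anchorSum, bracketTerm_add, Pi.add_apply, map_add, smul_add,
      Finset.sum_add_distrib]
    ring

noncomputable def ceDiffHom (n : ℕ) : ((Fin n → E) → R) →+ ((Fin (n + 1) → E) → R) :=
  AddMonoidHom.mk' (ceDiff ρ br n) (ceDiff_add ρ br)

theorem ceDiff_sub {n : ℕ} (η₁ η₂ : (Fin n → E) → R) :
    ceDiff ρ br n (η₁ - η₂) = ceDiff ρ br n η₁ - ceDiff ρ br n η₂ :=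
  (ceDiffHom ρ br n).map_sub η₁ η₂

theorem ceDiff_neg {n : ℕ} (η : (Fin n → E) → R) : ceDiff ρ br n (-η) = -ceDiff ρ br n η :=
  (ceDiffHom ρ br n).map_neg η

variable {ρ br}

theorem ceDiff_cons_cons (hskew : ∀ φ ψ : E, br φ ψ = -br ψ φ) {n : ℕ}
    {ω : (Fin (n + 1) → E) → R} (hω : IsAlternatingAdditive ω) (a b : E) (w : Fin n → E) :
    ceDiff ρ br (n + 1) ω (Fin.cons a (Fin.cons b w))
      = -ceDiff ρ br (n + 1) ω (Fin.cons b (Fin.cons a w)) := by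
  have hcartan : ∀ a b : E, ceDiff ρ br (n + 1) ω (Fin.cons a (Fin.cons b w))
      = lieDeriv ρ br a (interiorProd b ω) w - interiorProd (br a b) ω w
        - interiorProd b (ceDiff ρ br n (interiorProd a ω)) w := fun a b => by
    change interiorProd b (interiorProd a (ceDiff ρ br (n + 1) ω)) w = _
    rw [interiorProd_ceDiff_succ ρ br hω.isSkewSymmetric, interiorProd_sub, interiorProd_lieDeriv]
    rfl
  have hsymm : interiorProd b (ceDiff ρ br n (interiorProd a ω)) w
        + interiorProd a (ceDiff ρ br n (interiorProd b ω)) w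
      = lieDeriv ρ br b (interiorProd a ω) w + lieDeriv ρ br a (interiorProd b ω) w := by
    cases n with
    | zero => rw [interiorProd_ceDiff_zero, interiorProd_ceDiff_zero]
    | succ m =>
      have hswap : interiorProd a (interiorProd b ω) = -interiorProd b (interiorProd a ω) :=
        funext fun v => hω.map_cons_cons_swap b a v
      rw [interiorProd_ceDiff_succ ρ br (hω.interiorProd a).isSkewSymmetric,
        interiorProd_ceDiff_succ ρ br (hω.interiorProd b).isSkewSymmetric, hswap, ceDiff_neg]
      simp only [Pi.sub_apply, Pi.neg_apply]
      ring
  have hflip : interiorProd (br b a) ω w = -interiorProd (br a b) ω w := by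
    rw [hskew b a, hω.interiorProd_neg, Pi.neg_apply]
  rw [hcartan a b, hcartan b a, hflip]
  linear_combination -hsymm

theorem isSkewSymmetric_ceDiff (hbr : ∀ a x y : E, br a (x + y) = br a x + br a y)
    (hskew : ∀ φ ψ : E, br φ ψ = -br ψ φ) :
    ∀ {n : ℕ} {ω : (Fin n → E) → R}, IsAlternatingAdditive ω → IsSkewSymmetric (ceDiff ρ br n ω)
  | 0, ω, _ => isSkewSymmetric_fin_one (ceDiff ρ br 0 ω)
  | _ + 1, _, hω => isSkewSymmetric_of_interiorProd (ceDiff_cons_cons hskew hω) fun Y => by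
      rw [interiorProd_ceDiff_succ ρ br hω.isSkewSymmetric]
      exact (hω.lieDeriv hbr Y).isSkewSymmetric.sub
        (isSkewSymmetric_ceDiff hbr hskew (hω.interiorProd Y))

theorem lieDeriv_ceDiff (hbr : ∀ a x y : E, br a (x + y) = br a x + br a y)
    (H : E → E → E → E)
    (jacobi : ∀ φ ψ₁ ψ₂ : E,
      br φ (br ψ₁ ψ₂) = br (br φ ψ₁) ψ₂ + br ψ₁ (br φ ψ₂) + H φ ψ₁ ψ₂)
    (anchor_br : ∀ φ ψ : E, ρ (br φ ψ) = ⁅ρ φ, ρ ψ⁆) :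
    ∀ {n : ℕ} {ω : (Fin n → E) → R}, IsAlternatingAdditive ω →
      (∀ (x y z : E) (v : Fin n → E) (i : Fin n), ω (update v i (H x y z)) = 0) →
      ∀ X : E, lieDeriv ρ br X (ceDiff ρ br n ω) = ceDiff ρ br n (lieDeriv ρ br X ω)
  | 0, ω, hω, hH, X => eq_of_forall_interiorProd_eq fun Y => by
    rw [interiorProd_lieDeriv, interiorProd_ceDiff_zero, interiorProd_ceDiff_zero,
      interiorProd_ceDiff_zero,
      ← lieDeriv_lieDeriv_sub_lieDeriv_lieDeriv H jacobi anchor_br hω.map_update_add hH X Y]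
    abel
  | m + 1, ω, hω, hH, X => eq_of_forall_interiorProd_eq fun Y => by
    rw [interiorProd_lieDeriv, interiorProd_ceDiff_succ ρ br hω.isSkewSymmetric,
      interiorProd_ceDiff_succ ρ br hω.isSkewSymmetric,
      interiorProd_ceDiff_succ ρ br (hω.lieDeriv hbr X).isSkewSymmetric, interiorProd_lieDeriv,
      lieDeriv_sub, ceDiff_sub, lieDeriv_ceDiff hbr H jacobi anchor_br (hω.interiorProd Y)
        (interiorProd_update_eq_zero H hH Y) X,
      ← lieDeriv_lieDeriv_sub_lieDeriv_lieDeriv H jacobi anchor_br hω.map_update_add hH X Y]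
    abel

theorem ceDiff_ceDiff (hbr : ∀ a x y : E, br a (x + y) = br a x + br a y)
    (hskew : ∀ φ ψ : E, br φ ψ = -br ψ φ) (H : E → E → E → E)
    (jacobi : ∀ φ ψ₁ ψ₂ : E,
      br φ (br ψ₁ ψ₂) = br (br φ ψ₁) ψ₂ + br ψ₁ (br φ ψ₂) + H φ ψ₁ ψ₂)
    (anchor_br : ∀ φ ψ : E, ρ (br φ ψ) = ⁅ρ φ, ρ ψ⁆) :
    ∀ {p : ℕ} {ω : (Fin p → E) → R}, IsAlternatingAdditive ω →
      (∀ (x y z : E) (v : Fin p → E) (i : Fin p), ω (update v i (H x y z)) = 0) →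
      ceDiff ρ br (p + 1) (ceDiff ρ br p ω) = 0
  | 0, ω, hω, hH => eq_of_forall_interiorProd_eq fun X => by
    rw [interiorProd_ceDiff_succ ρ br (isSkewSymmetric_ceDiff hbr hskew hω),
      interiorProd_ceDiff_zero, lieDeriv_ceDiff hbr H jacobi anchor_br hω hH, sub_self]
    rfl
  | q + 1, ω, hω, hH => eq_of_forall_interiorProd_eq fun X => by
    rw [interiorProd_ceDiff_succ ρ br (isSkewSymmetric_ceDiff hbr hskew hω),
      interiorProd_ceDiff_succ ρ br hω.isSkewSymmetric, ceDiff_sub,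
      ceDiff_ceDiff hbr hskew H jacobi anchor_br (hω.interiorProd X)
        (interiorProd_update_eq_zero H hH X),
      lieDeriv_ceDiff hbr H jacobi anchor_br hω hH, sub_zero, sub_self]
    rfl

end Differential

theorem ceDiff_squared_eq_zero_on_naive_cochains_general
    {k R E : Type*} [Field k] [CommRing R] [Algebra k R]
    [AddCommGroup E] [Module R E]
    (ρ : E →ₗ[R] Derivation k R R)
    (br : E → E → E)
    (br_add_left : ∀ φ₁ φ₂ ψ : E, br (φ₁ + φ₂) ψ = br φ₁ ψ + br φ₂ ψ)
    (br_skew : ∀ φ ψ : E, br φ ψ = - br ψ φ)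
    (H : E →ₗ[R] E →ₗ[R] E →ₗ[R] E)
    (jacobi : ∀ φ ψ₁ ψ₂ : E,
      br φ (br ψ₁ ψ₂) = br (br φ ψ₁) ψ₂ + br ψ₁ (br φ ψ₂) + H φ ψ₁ ψ₂)
    (anchor_br : ∀ φ ψ : E, ρ (br φ ψ) = ⁅ρ φ, ρ ψ⁆)
    (p : ℕ) (ω : (Fin p → E) → R)
    -- ω is alternating
    (ω_alt : ∀ (v : Fin p → E) (i j : Fin p), i ≠ j → v i = v j → ω v = 0)
    -- ω is R-multilinear
    (ω_add : ∀ (v : Fin p → E) (i : Fin p) (x y : E),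
      ω (Function.update v i (x + y)) = ω (Function.update v i x) + ω (Function.update v i y))
    -- ω is annihilated by insertion of H (vacuous for p = 0)
    (ω_H : ∀ (x y z : E) (v : Fin p → E) (i : Fin p),
      ω (Function.update v i (H x y z)) = 0) :
    ∀ ψ : Fin (p + 2) → E, ceDiff ρ br (p + 1) (ceDiff ρ br p ω) ψ = 0 := by
  have br_add_right : ∀ a x y : E, br a (x + y) = br a x + br a y := fun a x y => by
    rw [br_skew, br_add_left, neg_add, ← br_skew, ← br_skew]
  exact congrFun (ceDiff_ceDiff br_add_right br_skew (fun x y z => H x y z) jacobi anchor_br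
    ⟨ω_alt, ω_add⟩ ω_H)

/-- For an `H`-twisted Lie–Rinehart algebra and a scalar-valued alternating
`R`-multilinear `p`-form `ω` annihilated by insertion of `H`, the Chevalley–Eilenberg-type
differential squares to zero: `D(Dω) = 0`. -/
theorem ceDiff_squared_eq_zero_on_naive_cochains
    {k R E : Type*} [Field k] [CommRing R] [Algebra k R]
    [AddCommGroup E] [Module k E] [Module R E] [IsScalarTower k R E]
    (ρ : E →ₗ[R] Derivation k R R)
    (br : E → E → E)
    (br_add_left : ∀ φ₁ φ₂ ψ : E, br (φ₁ + φ₂) ψ = br φ₁ ψ + br φ₂ ψ)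
    (br_smul_left : ∀ (a : k) (φ ψ : E), br (a • φ) ψ = a • br φ ψ)
    (br_skew : ∀ φ ψ : E, br φ ψ = - br ψ φ)
    (H : E →ₗ[R] E →ₗ[R] E →ₗ[R] E)
    (H_alt₁₂ : ∀ φ ψ : E, H φ φ ψ = 0)
    (H_alt₂₃ : ∀ φ ψ : E, H φ ψ ψ = 0)
    (H_ker : ∀ φ ψ χ : E, ρ (H φ ψ χ) = 0)
    (leibniz : ∀ (φ : E) (f : R) (ψ : E), br φ (f • ψ) = ρ φ f • ψ + f • br φ ψ)
    (jacobi : ∀ φ ψ₁ ψ₂ : E,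
      br φ (br ψ₁ ψ₂) = br (br φ ψ₁) ψ₂ + br ψ₁ (br φ ψ₂) + H φ ψ₁ ψ₂)
    (anchor_br : ∀ φ ψ : E, ρ (br φ ψ) = ⁅ρ φ, ρ ψ⁆)
    (p : ℕ) (ω : (Fin p → E) → R)
    -- ω is alternating
    (ω_alt : ∀ (v : Fin p → E) (i j : Fin p), i ≠ j → v i = v j → ω v = 0)
    -- ω is R-multilinear
    (ω_add : ∀ (v : Fin p → E) (i : Fin p) (x y : E),
      ω (Function.update v i (x + y)) = ω (Function.update v i x) + ω (Function.update v i y))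
    (ω_smul : ∀ (v : Fin p → E) (i : Fin p) (f : R) (x : E),
      ω (Function.update v i (f • x)) = f • ω (Function.update v i x))
    -- ω is annihilated by insertion of H (vacuous for p = 0)
    (ω_H : ∀ (x y z : E) (v : Fin p → E) (i : Fin p),
      ω (Function.update v i (H x y z)) = 0) :
    ∀ ψ : Fin (p + 2) → E, ceDiff ρ br (p + 1) (ceDiff ρ br p ω) ψ = 0 :=
  ceDiff_squared_eq_zero_on_naive_cochains_general ρ br br_add_left br_skew H jacobi anchor_br p ω
    ω_alt ω_add ω_H
end

section
/- Let b : ℝ³ × ℝ³ → ℝ³ be the twisted cross-product bracket b(x,y) := x × y + (x₁y₂ − x₂y₁)·e₁. If α is a linear functional on ℝ³ satisfying α(e₂) = 0 and α(b(x,y)) = 0 for all x, y ∈ ℝ³, then α = 0. Consequently the differential D, Dα(x,y) = −α(b(x,y)), is injective on the naive 1-cochains C^{1,0} = {α : α(e₂) = 0}, and the first naive cohomology H^{1,0}_naive of this twisted Lie algebra vanishes. -/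
/-- The twisted cross-product bracket on `ℝ³`:
`b(x,y) = x × y + (x₁y₂ − x₂y₁)·e₁`. -/
noncomputable def twistedCross (x y : Fin 3 → ℝ) : Fin 3 → ℝ :=
  crossProduct x y + (x 0 * y 1 - x 1 * y 0) • (Pi.single 0 1 : Fin 3 → ℝ)

/-!
The brackets `b(e₂, e₃) = e₁` and `b(e₁, e₂) = e₁ + e₃`, together with `e₂`, span `ℝ³`,
so a functional killing `e₂` and all brackets kills a basis. Injectivity of `D` on `C^{1,0}`
follows by applying this to `α - β`.
-/

theorem twistedCross_single_one_single_two :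
    twistedCross (Pi.single 1 1) (Pi.single 2 1) = Pi.single 0 1 := by
  funext i
  fin_cases i <;> simp [twistedCross, cross_apply]

theorem twistedCross_single_zero_single_one :
    twistedCross (Pi.single 0 1) (Pi.single 1 1) = Pi.single 0 1 + Pi.single 2 1 := by
  funext i
  fin_cases i <;> simp [twistedCross, cross_apply]

theorem Module.Dual.eq_zero_of_apply_twistedCross_eq_zero (α : Module.Dual ℝ (Fin 3 → ℝ))
    (h₁ : α (Pi.single 1 1) = 0) (hb : ∀ x y, α (twistedCross x y) = 0) : α = 0 := by
  have h₀ : α (Pi.single 0 1) = 0 := by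
    simpa only [twistedCross_single_one_single_two] using hb (Pi.single 1 1) (Pi.single 2 1)
  have h₂ : α (Pi.single 2 1) = 0 := by
    simpa only [twistedCross_single_zero_single_one, map_add, h₀, zero_add]
      using hb (Pi.single 0 1) (Pi.single 1 1)
  refine (Pi.basisFun ℝ (Fin 3)).ext fun i => ?_
  fin_cases i <;> simpa

/-- a linear functional `α` on `ℝ³` with `α(e₂) = 0` that annihilates all
brackets `b(x,y)` is zero.  Consequently the differential `Dα(x,y) = −α(b(x,y))` is
injective on the naive 1-cochains `C^{1,0} = {α : α(e₂) = 0}`, and the first naive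
cohomology of this twisted Lie algebra vanishes. -/
theorem twistedCross_first_naive_cohomology_vanishes :
    -- D has trivial kernel on C^{1,0}
    (∀ α : Module.Dual ℝ (Fin 3 → ℝ),
      α (Pi.single 1 1 : Fin 3 → ℝ) = 0 →
      (∀ x y : Fin 3 → ℝ, α (twistedCross x y) = 0) → α = 0) ∧
    -- hence D is injective on C^{1,0}
    (∀ α β : Module.Dual ℝ (Fin 3 → ℝ),
      α (Pi.single 1 1 : Fin 3 → ℝ) = 0 → β (Pi.single 1 1 : Fin 3 → ℝ) = 0 →
      (∀ x y : Fin 3 → ℝ, -α (twistedCross x y) = -β (twistedCross x y)) → α = β) := by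
  refine ⟨Module.Dual.eq_zero_of_apply_twistedCross_eq_zero, fun α β hα hβ hD => ?_⟩
  refine sub_eq_zero.mp ((α - β).eq_zero_of_apply_twistedCross_eq_zero ?_ fun x y => ?_)
  · simp [hα, hβ]
  · simp [neg_inj.mp (hD x y)]
end
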